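/- The function W : (ℂ∖{0})² → ℂ defined by W(y_1, y_2) = (5/2)·y_1 + y_2 − (7/2)·y_1^{−1} + 3·y_1^{−2}y_2^{−1} − (1/2)·y_1^{−1}y_2^{−1} − 4·y_2^{−1} + (1/2)·y_1 y_2^{−1} + y_1^{2} y_2^{−1} has exactly 8 critical points, and each of these critical points is nondegenerate. -/

import Mathlib

/-!
Clearing denominators, `∂W/∂y₁ = 0` is linear in `y₂`: it says
`y₂ · y₁(5y₁² + 7) = 12 - y₁ - y₁³ - 4y₁⁴`, while `∂W/∂y₂ = 0` says
`2y₁²y₂² = 2y₁⁴ + y₁³ - 8y₁² - y₁ + 6`. Eliminating `y₂` leaves the octic `critPoly` in `y₁`, and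
conversely every root of `critPoly` gives back exactly one critical point. The octic is separable,
so it has 8 distinct roots over `ℂ`. At a critical point the Hessian determinant, times a nonzero
factor, is a sextic in `y₁` that is coprime to `critPoly`. Every coprimality is witnessed by an
explicit Bézout identity, computed with the extended Euclidean algorithm over `ℚ`.
-/

/-- The potential function of the monotone fiber `L(2.5,3)` in `X̂₈` with the chosen bulk deformation (energy factor dropped). -/
noncomputable def W : ℂ → ℂ → ℂ := fun y₁ y₂ =>
  (5 / 2) * y₁ + y₂ - (7 / 2) * y₁⁻¹ + 3 * (y₁ ^ 2)⁻¹ * y₂⁻¹ - (1 / 2) * y₁⁻¹ * y₂⁻¹ - 4 * y₂⁻¹ + (1 / 2) * y₁ * y₂⁻¹ + y₁ ^ 2 * y₂⁻¹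

/-- A point of `(ℂ∖{0})²` is a critical point of `W` if both partial
derivatives of `W` vanish there. -/
def IsCritPt (p : ℂ × ℂ) : Prop :=
  p.1 ≠ 0 ∧ p.2 ≠ 0 ∧
    deriv (fun z => W z p.2) p.1 = 0 ∧ deriv (fun z => W p.1 z) p.2 = 0

/-- The Hessian determinant
`(∂²W/∂y₁²)(∂²W/∂y₂²) - (∂²W/∂y₁∂y₂)²` of `W` at a point. -/
noncomputable def hessDet (p : ℂ × ℂ) : ℂ :=
  deriv (deriv (fun z => W z p.2)) p.1 * deriv (deriv (fun z => W p.1 z)) p.2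
    - (deriv (fun w => deriv (fun z => W z w) p.1) p.2) ^ 2

open Polynomial Filter Topology

namespace Polynomial

variable {K : Type*} [Field K]

theorem isCoprime_of_mul_add_mul_eq_C {p q u v : K[X]} {c : K} (hc : c ≠ 0)
    (h : u * p + v * q = C c) : IsCoprime p q :=
  ⟨C c⁻¹ * u, C c⁻¹ * v, by
    rw [mul_assoc, mul_assoc, ← mul_add, h, ← C_mul, inv_mul_cancel₀ hc, C_1]⟩

theorem eval_ne_zero_of_isCoprime {R : Type*} [CommRing R] [Nontrivial R] {p q : R[X]}
    (h : IsCoprime p q) {x : R} (hx : p.IsRoot x) : q.eval x ≠ 0 := by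
  simpa [hx.eq_zero] using aeval_ne_zero_of_isCoprime h x

theorem ncard_setOf_isRoot_of_separable [IsAlgClosed K] {p : K[X]} (hp : p.Separable) :
    {x | p.IsRoot x}.ncard = p.natDegree := by
  classical
  have hroots : {x | p.IsRoot x} = (p.roots.toFinset : Set K) := by
    ext x
    simp [mem_roots hp.ne_zero]
  rw [hroots, Set.ncard_coe_finset, Multiset.toFinset_card_of_nodup (nodup_roots hp),
    splits_iff_card_roots.mp (IsAlgClosed.splits p)]

end Polynomial

noncomputable def W₁ (a b : ℂ) : ℂ :=
  5 / 2 + 7 / 2 * (a ^ 2)⁻¹ - 6 * (a ^ 3)⁻¹ * b⁻¹ + 1 / 2 * (a ^ 2)⁻¹ * b⁻¹ + 1 / 2 * b⁻¹ +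
    2 * a * b⁻¹

noncomputable def W₂ (a b : ℂ) : ℂ :=
  1 - 3 * (a ^ 2)⁻¹ * (b ^ 2)⁻¹ + 1 / 2 * a⁻¹ * (b ^ 2)⁻¹ + 4 * (b ^ 2)⁻¹ - 1 / 2 * a * (b ^ 2)⁻¹ -
    a ^ 2 * (b ^ 2)⁻¹

section Derivatives

variable {a : ℂ} (b : ℂ)

theorem hasDerivAt_W_fst (ha : a ≠ 0) : HasDerivAt (fun z => W z b) (W₁ a b) a := by
  have hinv := hasDerivAt_inv ha
  have hsq : HasDerivAt (fun z : ℂ => z ^ 2) (2 * a) a := by simpa using hasDerivAt_pow 2 a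
  have H := ((((((((hasDerivAt_id a).const_mul (5 / 2 : ℂ)).add_const b).sub
      (hinv.const_mul (7 / 2 : ℂ))).add
      (((hsq.inv (pow_ne_zero 2 ha)).const_mul 3).mul_const b⁻¹)).sub
      ((hinv.const_mul (1 / 2 : ℂ)).mul_const b⁻¹)).sub_const (4 * b⁻¹)).add
      (((hasDerivAt_id a).const_mul (1 / 2 : ℂ)).mul_const b⁻¹)).add (hsq.mul_const b⁻¹)
  exact H.congr_deriv (by simp only [W₁]; field_simp; ring)

theorem hasDerivAt_W₁_fst (ha : a ≠ 0) :
    HasDerivAt (fun z => W₁ z b) (-7 / a ^ 3 + 18 / (a ^ 4 * b) - 1 / (a ^ 3 * b) + 2 / b) a := by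
  have hsq : HasDerivAt (fun z : ℂ => z ^ 2) (2 * a) a := by simpa using hasDerivAt_pow 2 a
  have hcube : HasDerivAt (fun z : ℂ => z ^ 3) (3 * a ^ 2) a := by simpa using hasDerivAt_pow 3 a
  have hsqinv := hsq.inv (pow_ne_zero 2 ha)
  have H := (((((hsqinv.const_mul (7 / 2 : ℂ)).const_add (5 / 2 : ℂ)).sub
      (((hcube.inv (pow_ne_zero 3 ha)).const_mul 6).mul_const b⁻¹)).add
      ((hsqinv.const_mul (1 / 2 : ℂ)).mul_const b⁻¹)).add_const (1 / 2 * b⁻¹)).add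
      (((hasDerivAt_id a).const_mul (2 : ℂ)).mul_const b⁻¹)
  exact H.congr_deriv (by field_simp; ring)

variable (a) {b}

theorem hasDerivAt_W_snd (hb : b ≠ 0) : HasDerivAt (fun w => W a w) (W₂ a b) b := by
  have hinv := hasDerivAt_inv hb
  have H := (((((((hasDerivAt_id b).const_add (5 / 2 * a)).sub_const (7 / 2 * a⁻¹)).add
      (hinv.const_mul (3 * (a ^ 2)⁻¹))).sub (hinv.const_mul (1 / 2 * a⁻¹))).sub
      (hinv.const_mul 4)).add (hinv.const_mul (1 / 2 * a))).add (hinv.const_mul (a ^ 2))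
  exact H.congr_deriv (by simp only [W₂]; ring)

theorem hasDerivAt_W₁_snd (hb : b ≠ 0) :
    HasDerivAt (fun w => W₁ a w)
      (6 / (a ^ 3 * b ^ 2) - 1 / (2 * a ^ 2 * b ^ 2) - 1 / (2 * b ^ 2) - 2 * a / b ^ 2) b := by
  have hinv := hasDerivAt_inv hb
  have H := ((((hinv.const_mul (6 * (a ^ 3)⁻¹)).const_sub (5 / 2 + 7 / 2 * (a ^ 2)⁻¹)).add
      (hinv.const_mul (1 / 2 * (a ^ 2)⁻¹))).add (hinv.const_mul (1 / 2 : ℂ))).add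
      (hinv.const_mul (2 * a))
  exact H.congr_deriv (by field_simp; ring)

theorem hasDerivAt_W₂_snd (hb : b ≠ 0) :
    HasDerivAt (fun w => W₂ a w) ((6 / a ^ 2 - 1 / a - 8 + a + 2 * a ^ 2) / b ^ 3) b := by
  have hsq : HasDerivAt (fun w : ℂ => w ^ 2) (2 * b) b := by simpa using hasDerivAt_pow 2 b
  have hsqinv := hsq.inv (pow_ne_zero 2 hb)
  have H := (((((hsqinv.const_mul (3 * (a ^ 2)⁻¹)).const_sub 1).add
      (hsqinv.const_mul (1 / 2 * a⁻¹))).add (hsqinv.const_mul 4)).sub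
      (hsqinv.const_mul (1 / 2 * a))).sub (hsqinv.const_mul (a ^ 2))
  exact H.congr_deriv (by field_simp; ring)

end Derivatives

theorem deriv_deriv_W_fst (b : ℂ) {a : ℂ} (ha : a ≠ 0) :
    deriv (deriv fun z => W z b) a = -7 / a ^ 3 + 18 / (a ^ 4 * b) - 1 / (a ^ 3 * b) + 2 / b := by
  have h : deriv (fun z => W z b) =ᶠ[𝓝 a] fun z => W₁ z b := by
    filter_upwards [eventually_ne_nhds ha] with z hz using (hasDerivAt_W_fst b hz).deriv
  rw [h.deriv_eq, (hasDerivAt_W₁_fst b ha).deriv]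

theorem deriv_deriv_W_snd (a : ℂ) {b : ℂ} (hb : b ≠ 0) :
    deriv (deriv fun w => W a w) b = (6 / a ^ 2 - 1 / a - 8 + a + 2 * a ^ 2) / b ^ 3 := by
  have h : deriv (fun w => W a w) =ᶠ[𝓝 b] fun w => W₂ a w := by
    filter_upwards [eventually_ne_nhds hb] with w hw using (hasDerivAt_W_snd a hw).deriv
  rw [h.deriv_eq, (hasDerivAt_W₂_snd a hb).deriv]

theorem deriv_deriv_W_fst_snd {a b : ℂ} (ha : a ≠ 0) (hb : b ≠ 0) :
    deriv (fun w => deriv (fun z => W z w) a) b =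
      6 / (a ^ 3 * b ^ 2) - 1 / (2 * a ^ 2 * b ^ 2) - 1 / (2 * b ^ 2) - 2 * a / b ^ 2 := by
  simp only [fun w => (hasDerivAt_W_fst w ha).deriv, (hasDerivAt_W₁_snd a hb).deriv]

theorem isCritPt_iff_polynomial {a b : ℂ} :
    IsCritPt (a, b) ↔ a ≠ 0 ∧ b ≠ 0 ∧ b * (a * (5 * a ^ 2 + 7)) = 12 - a - a ^ 3 - 4 * a ^ 4 ∧
      2 * a ^ 2 * b ^ 2 = 2 * a ^ 4 + a ^ 3 - 8 * a ^ 2 - a + 6 := by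
  dsimp only [IsCritPt]
  refine and_congr_right fun ha => and_congr_right fun hb => ?_
  have h₁ : W₁ a b =
      (b * (a * (5 * a ^ 2 + 7)) - (12 - a - a ^ 3 - 4 * a ^ 4)) / (2 * a ^ 3 * b) := by
    simp only [W₁]; field_simp; ring
  have h₂ : W₂ a b =
      (2 * a ^ 2 * b ^ 2 - (2 * a ^ 4 + a ^ 3 - 8 * a ^ 2 - a + 6)) / (2 * a ^ 2 * b ^ 2) := by
    simp only [W₂]; field_simp; ring
  rw [(hasDerivAt_W_fst b ha).deriv, (hasDerivAt_W_snd a hb).deriv, h₁, h₂]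
  simp [ha, hb, sub_eq_zero]

theorem hessDet_mul_eq {a b : ℂ} (ha : a ≠ 0) (hb : b ≠ 0)
    (hA : b * (a * (5 * a ^ 2 + 7)) = 12 - a - a ^ 3 - 4 * a ^ 4) :
    hessDet (a, b) * (4 * a ^ 4 * (5 * a ^ 2 + 7) * b ^ 4) =
      89 + 144 * a - 891 * a ^ 2 + 192 * a ^ 3 + 87 * a ^ 4 + 48 * a ^ 5 - 101 * a ^ 6 := by
  dsimp only [hessDet]
  rw [deriv_deriv_W_fst b ha, deriv_deriv_W_snd a hb, deriv_deriv_W_fst_snd ha hb]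
  field_simp
  linear_combination -112 * (6 - a - 8 * a ^ 2 + a ^ 3 + 2 * a ^ 4) * hA

noncomputable def critPoly : ℂ[X] :=
  18 * X ^ 8 + 9 * X ^ 7 - 62 * X ^ 6 + 29 * X ^ 5 - 124 * X ^ 4 + 27 * X ^ 3 + 26 * X ^ 2 - X + 6

theorem eval_critPoly (a : ℂ) : critPoly.eval a =
    18 * a ^ 8 + 9 * a ^ 7 - 62 * a ^ 6 + 29 * a ^ 5 - 124 * a ^ 4 + 27 * a ^ 3 + 26 * a ^ 2 - a +
      6 := by
  simp [critPoly]

theorem natDegree_critPoly : critPoly.natDegree = 8 := by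
  unfold critPoly
  compute_degree!

theorem derivative_critPoly : derivative critPoly =
    144 * X ^ 7 + 63 * X ^ 6 - 372 * X ^ 5 + 145 * X ^ 4 - 496 * X ^ 3 + 81 * X ^ 2 + 52 * X -
      1 := by
  unfold critPoly
  simp only [derivative_add, derivative_sub, derivative_mul, derivative_X_pow,
      derivative_X, derivative_ofNat, C_eq_natCast]
  push_cast
  ring

theorem separable_critPoly : critPoly.Separable := by
  refine isCoprime_of_mul_add_mul_eq_C (c := 119722252478820314400) (by norm_num)
    (u := 19978869115230493847 + 968135889712182669 * X - 33839273401226237106 * X ^ 2 +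
      8002776736452662438 * X ^ 3 - 38455366510839374313 * X ^ 4 + 6893383561722564957 * X ^ 5 +
      13333869954065929392 * X ^ 6)
    (v := 150962212562648682 - 6320018723699666369 * X - 966213715884873229 * X ^ 2 +
      9415045786922164928 * X ^ 3 - 1858307789826955416 * X ^ 4 + 6233883952043122099 * X ^ 5 -
      965843804231460693 * X ^ 6 - 1666733744258241174 * X ^ 7) ?_
  rw [derivative_critPoly, critPoly, map_ofNat]
  ring

section RootsOfCritPoly

variable {a : ℂ}

theorem ne_zero_of_isRoot_critPoly (h : critPoly.IsRoot a) : a ≠ 0 := by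
  rintro rfl
  simp [critPoly] at h

theorem quadratic_ne_zero_of_isRoot_critPoly (h : critPoly.IsRoot a) : 5 * a ^ 2 + 7 ≠ 0 := by
  have hcop : IsCoprime critPoly (5 * X ^ 2 + 7) :=
    isCoprime_of_mul_add_mul_eq_C (c := 60016968) (by norm_num)
      (u := -1668125 + 325000 * X)
      (v := 10003674 - 516875 * X - 903160 * X ^ 2 + 5596250 * X ^ 3 - 30158100 * X ^ 4 +
        8670625 * X ^ 5 + 5420250 * X ^ 6 - 1170000 * X ^ 7)
      (by rw [critPoly, map_ofNat]; ring)
  simpa using eval_ne_zero_of_isCoprime hcop h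

theorem quartic_ne_zero_of_isRoot_critPoly (h : critPoly.IsRoot a) :
    12 - a - a ^ 3 - 4 * a ^ 4 ≠ 0 := by
  have hcop : IsCoprime critPoly (12 - X - X ^ 3 - 4 * X ^ 4) :=
    isCoprime_of_mul_add_mul_eq_C (c := 661687072200) (by norm_num)
      (u := 3259709448 - 2041196087 * X - 3118538948 * X ^ 2 + 182859104 * X ^ 3)
      (v := 53510734626 + 5751468383 * X - 5194244972 * X ^ 2 + 763311604 * X ^ 3 +
        63428238012 * X ^ 4 - 15579483943 * X ^ 5 - 13827708774 * X ^ 6 + 822865968 * X ^ 7)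
      (by rw [critPoly, map_ofNat]; ring)
  simpa using eval_ne_zero_of_isCoprime hcop h

theorem sextic_ne_zero_of_isRoot_critPoly (h : critPoly.IsRoot a) :
    89 + 144 * a - 891 * a ^ 2 + 192 * a ^ 3 + 87 * a ^ 4 + 48 * a ^ 5 - 101 * a ^ 6 ≠ 0 := by
  have hcop : IsCoprime critPoly
      (89 + 144 * X - 891 * X ^ 2 + 192 * X ^ 3 + 87 * X ^ 4 + 48 * X ^ 5 - 101 * X ^ 6) :=
    isCoprime_of_mul_add_mul_eq_C (c := 43710205359189600) (by norm_num)
      (u := 5992893964471913 - 1465448951843402 * X - 588120851646030 * X ^ 2 -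
        200787741670618 * X ^ 3 + 717954025291753 * X ^ 4 + 3654469465596 * X ^ 5)
      (v := 87110579464698 + 25187238568717 * X - 896218010888610 * X ^ 2 +
        131259923382350 * X ^ 3 - 408737565660310 * X ^ 4 + 87620653906713 * X ^ 5 +
        128587373036262 * X ^ 6 + 651291587928 * X ^ 7)
      (by rw [critPoly, map_ofNat]; ring)
  simpa using eval_ne_zero_of_isCoprime hcop h

end RootsOfCritPoly

noncomputable def critPointOver (a : ℂ) : ℂ × ℂ :=
  (a, (12 - a - a ^ 3 - 4 * a ^ 4) / (a * (5 * a ^ 2 + 7)))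

theorem isCritPt_iff {a b : ℂ} :
    IsCritPt (a, b) ↔ critPoly.IsRoot a ∧ critPointOver a = (a, b) := by
  rw [isCritPt_iff_polynomial]
  constructor
  · rintro ⟨ha, -, hA, hB⟩
    have hroot : critPoly.IsRoot a := by
      rw [IsRoot.def, eval_critPoly]
      linear_combination -(5 * a ^ 2 + 7) ^ 2 * hB +
        2 * (b * (a * (5 * a ^ 2 + 7)) + (12 - a - a ^ 3 - 4 * a ^ 4)) * hA
    refine ⟨hroot, ?_⟩
    rw [critPointOver, Prod.mk.injEq,
      div_eq_iff (mul_ne_zero ha (quadratic_ne_zero_of_isRoot_critPoly hroot))]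
    exact ⟨rfl, hA.symm⟩
  · rintro ⟨hroot, hab⟩
    have ha := ne_zero_of_isRoot_critPoly hroot
    have hQ := quadratic_ne_zero_of_isRoot_critPoly hroot
    have hb : (12 - a - a ^ 3 - 4 * a ^ 4) / (a * (5 * a ^ 2 + 7)) = b := (Prod.mk.inj hab).2
    have hA : b * (a * (5 * a ^ 2 + 7)) = 12 - a - a ^ 3 - 4 * a ^ 4 := by
      rw [← hb, div_mul_cancel₀ _ (mul_ne_zero ha hQ)]
    refine ⟨ha, hb ▸ div_ne_zero (quartic_ne_zero_of_isRoot_critPoly hroot) (mul_ne_zero ha hQ),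
      hA, mul_left_cancel₀ (pow_ne_zero 2 hQ) ?_⟩
    rw [IsRoot.def, eval_critPoly] at hroot
    linear_combination 2 * (b * (a * (5 * a ^ 2 + 7)) + (12 - a - a ^ 3 - 4 * a ^ 4)) * hA - hroot

theorem setOf_isCritPt : {p | IsCritPt p} = critPointOver '' {a | critPoly.IsRoot a} := by
  ext ⟨a, b⟩
  simp only [Set.mem_ofPred_eq, Set.mem_image, isCritPt_iff]
  constructor
  · rintro ⟨hroot, hab⟩
    exact ⟨a, hroot, hab⟩
  · rintro ⟨x, hroot, hxab⟩
    obtain rfl : x = a := congrArg Prod.fst hxab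
    exact ⟨hroot, hxab⟩

theorem critPointOver_injective : Function.Injective critPointOver :=
  fun _ _ h => congrArg Prod.fst h

/-- `W` has exactly 8 critical points in `(ℂ∖{0})²`, and each of them is
nondegenerate (nonvanishing Hessian determinant). -/
theorem W_critical_points :
    {p : ℂ × ℂ | IsCritPt p}.ncard = 8 ∧
      ∀ p : ℂ × ℂ, IsCritPt p → hessDet p ≠ 0 := by
  constructor
  · rw [setOf_isCritPt, Set.ncard_image_of_injective _ critPointOver_injective,
      ncard_setOf_isRoot_of_separable separable_critPoly, natDegree_critPoly]
  · rintro ⟨a, b⟩ hp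
    obtain ⟨ha, hb, hA, -⟩ := isCritPt_iff_polynomial.mp hp
    have hsextic := sextic_ne_zero_of_isRoot_critPoly (isCritPt_iff.mp hp).1
    rw [← hessDet_mul_eq ha hb hA] at hsextic
    exact left_ne_zero_of_mul hsextic
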